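/- arXiv:2507.12454 — 2 statements merged into one kernel-verified Lean document; each statement's English description precedes it below -/
import Mathlib

section
/- Let M₁, M₂, M₃, M₄ ∈ SL(2,ℂ) with M₁M₂M₃M₄ = I. Set aᵢ = trace(Mᵢ), x = trace(M₁M₂), y = trace(M₁M₃), z = trace(M₂M₃). Then xyz + x² + y² + z² − (a₁a₂ + a₃a₄)x − (a₁a₃ + a₂a₄)y − (a₁a₄ + a₂a₃)z + a₁a₂a₃a₄ + a₁² + a₂² + a₃² + a₄² − 4 = 0. -/
/-!
Since `M₄ = (M₁ M₂ M₃)⁻¹` and inversion preserves traces in `SL(2)`, `a₄ = w := tr (M₁ M₂ M₃)`.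
Fricke's trace identities say that `w` and `w' := tr (M₁ M₃ M₂)` have sum
`P = a₁ z + a₂ y + a₃ x - a₁ a₂ a₃` and product
`Q = x y z + x² + y² + z² - a₁ a₂ x - a₁ a₃ y - a₂ a₃ z + a₁² + a₂² + a₃² - 4`,
so `w` is a root of `t² - P t + Q`; written out, `w² - P w + Q = 0` is the claimed equation.
-/

namespace Matrix

variable {R : Type*} [CommRing R]

theorem eq_adjugate_of_mul_eq_one {n : Type*} [Fintype n] [DecidableEq n] {N M : Matrix n n R}
    (hN : N.det = 1) (h : N * M = 1) : M = N.adjugate :=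
  calc M = N.adjugate * N * M := by rw [adjugate_mul, hN, one_smul, Matrix.one_mul]
    _ = N.adjugate := by rw [Matrix.mul_assoc, h, Matrix.mul_one]

theorem trace_adjugate_fin_two (A : Matrix (Fin 2) (Fin 2) R) : A.adjugate.trace = A.trace := by
  rw [adjugate_fin_two, trace_fin_two, trace_fin_two]
  simp [add_comm]

theorem trace_mul_mul_add_trace_mul_mul_swap_fin_two (A B C : Matrix (Fin 2) (Fin 2) R) :
    (A * B * C).trace + (A * C * B).trace =
      A.trace * (B * C).trace + B.trace * (A * C).trace + C.trace * (A * B).trace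
        - A.trace * B.trace * C.trace := by
  simp only [trace_fin_two, mul_apply, Fin.sum_univ_two]
  ring

/-- Fricke's product identity, made homogeneous by determinant factors so that it holds for all
`2 × 2` matrices and not only in `SL(2)`. -/
theorem trace_mul_mul_mul_trace_mul_mul_swap_fin_two (A B C : Matrix (Fin 2) (Fin 2) R) :
    (A * B * C).trace * (A * C * B).trace =
      (A * B).trace * (A * C).trace * (B * C).trace
        + C.det * (A * B).trace ^ 2 + B.det * (A * C).trace ^ 2 + A.det * (B * C).trace ^ 2
        - C.det * A.trace * B.trace * (A * B).trace - B.det * A.trace * C.trace * (A * C).trace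
        - A.det * B.trace * C.trace * (B * C).trace
        + B.det * C.det * A.trace ^ 2 + A.det * C.det * B.trace ^ 2 + A.det * B.det * C.trace ^ 2
        - 4 * A.det * B.det * C.det := by
  simp only [trace_fin_two, det_fin_two, mul_apply, Fin.sum_univ_two]
  ring

end Matrix

theorem markov_equation_for_sl2_quadruples_general
    (M₁ M₂ M₃ M₄ : Matrix (Fin 2) (Fin 2) ℂ)
    (h₁ : M₁.det = 1) (h₂ : M₂.det = 1) (h₃ : M₃.det = 1)
    (hprod : M₁ * M₂ * M₃ * M₄ = 1)
    (a₁ a₂ a₃ a₄ x y z : ℂ)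
    (ha₁ : a₁ = M₁.trace) (ha₂ : a₂ = M₂.trace) (ha₃ : a₃ = M₃.trace)
    (ha₄ : a₄ = M₄.trace)
    (hx : x = (M₁ * M₂).trace) (hy : y = (M₁ * M₃).trace)
    (hz : z = (M₂ * M₃).trace) :
    x * y * z + x ^ 2 + y ^ 2 + z ^ 2
      - (a₁ * a₂ + a₃ * a₄) * x - (a₁ * a₃ + a₂ * a₄) * y - (a₁ * a₄ + a₂ * a₃) * z
      + a₁ * a₂ * a₃ * a₄ + a₁ ^ 2 + a₂ ^ 2 + a₃ ^ 2 + a₄ ^ 2 - 4 = 0 := by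
  have hdet : (M₁ * M₂ * M₃).det = 1 := by simp only [Matrix.det_mul, h₁, h₂, h₃, mul_one]
  have ha₄' : a₄ = (M₁ * M₂ * M₃).trace := by
    rw [ha₄, Matrix.eq_adjugate_of_mul_eq_one hdet hprod, Matrix.trace_adjugate_fin_two]
  have hsum := Matrix.trace_mul_mul_add_trace_mul_mul_swap_fin_two M₁ M₂ M₃
  have hmul := Matrix.trace_mul_mul_mul_trace_mul_mul_swap_fin_two M₁ M₂ M₃
  rw [h₁, h₂, h₃] at hmul
  subst ha₁ ha₂ ha₃ ha₄' hx hy hz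
  linear_combination (M₁ * M₂ * M₃).trace * hsum - hmul

theorem markov_equation_for_sl2_quadruples
    (M₁ M₂ M₃ M₄ : Matrix (Fin 2) (Fin 2) ℂ)
    (h₁ : M₁.det = 1) (h₂ : M₂.det = 1) (h₃ : M₃.det = 1) (h₄ : M₄.det = 1)
    (hprod : M₁ * M₂ * M₃ * M₄ = 1)
    (a₁ a₂ a₃ a₄ x y z : ℂ)
    (ha₁ : a₁ = M₁.trace) (ha₂ : a₂ = M₂.trace) (ha₃ : a₃ = M₃.trace)
    (ha₄ : a₄ = M₄.trace)
    (hx : x = (M₁ * M₂).trace) (hy : y = (M₁ * M₃).trace)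
    (hz : z = (M₂ * M₃).trace) :
    x * y * z + x ^ 2 + y ^ 2 + z ^ 2
      - (a₁ * a₂ + a₃ * a₄) * x - (a₁ * a₃ + a₂ * a₄) * y - (a₁ * a₄ + a₂ * a₃) * z
      + a₁ * a₂ * a₃ * a₄ + a₁ ^ 2 + a₂ ^ 2 + a₃ ^ 2 + a₄ ^ 2 - 4 = 0 :=
  markov_equation_for_sl2_quadruples_general M₁ M₂ M₃ M₄ h₁ h₂ h₃ hprod a₁ a₂ a₃ a₄ x y z ha₁ ha₂
    ha₃ ha₄ hx hy hz
end

section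
/- For n = 2, the module of antisymmetric polynomials R⁻ ⊂ ℂ[x₁,x₂,y₁,y₂] (anti-invariants under the simultaneous swap of (x₁,y₁) with (x₂,y₂)) is generated as a module over the invariants R⁺ by the two elements x₁ − x₂ and y₁ − y₂. -/
open MvPolynomial

/-- The involution of `ℂ[x₁,x₂,y₁,y₂]` simultaneously swapping `x₁ ↔ x₂` and `y₁ ↔ y₂`.
Variables: `.inl i` is `xᵢ`, `.inr i` is `yᵢ`. -/
noncomputable def swapAction :
    MvPolynomial (Fin 2 ⊕ Fin 2) ℂ →ₐ[ℂ] MvPolynomial (Fin 2 ⊕ Fin 2) ℂ :=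
  MvPolynomial.rename (Sum.map (Equiv.swap 0 1) (Equiv.swap 0 1))

noncomputable abbrev tauX : MvPolynomial (Fin 2 ⊕ Fin 2) ℂ →ₐ[ℂ] MvPolynomial (Fin 2 ⊕ Fin 2) ℂ :=
  MvPolynomial.rename (Sum.map (Equiv.swap 0 1) id)

noncomputable abbrev tauY : MvPolynomial (Fin 2 ⊕ Fin 2) ℂ →ₐ[ℂ] MvPolynomial (Fin 2 ⊕ Fin 2) ℂ :=
  MvPolynomial.rename (Sum.map id (Equiv.swap 0 1))

lemma swap_eq_comp (p : MvPolynomial (Fin 2 ⊕ Fin 2) ℂ) :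
    swapAction p = tauX (tauY p) := by
  have h : swapAction = tauX.comp tauY := by
    apply MvPolynomial.algHom_ext
    intro v
    cases v <;> simp [swapAction, tauX, tauY]
  rw [h]; rfl

lemma swap_invol (p : MvPolynomial (Fin 2 ⊕ Fin 2) ℂ) :
    swapAction (swapAction p) = p := by
  have h : swapAction.comp swapAction = AlgHom.id ℂ _ := by
    apply MvPolynomial.algHom_ext
    intro v
    cases v <;> simp [swapAction]
  have := congrArg (fun φ => φ p) h
  simpa using this

lemma sub_tauX_dvd (g : MvPolynomial (Fin 2 ⊕ Fin 2) ℂ) :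
    ∃ a, g - tauX g = a * (X (Sum.inl 0) - X (Sum.inl 1)) := by
  set u : MvPolynomial (Fin 2 ⊕ Fin 2) ℂ := X (Sum.inl 0) - X (Sum.inl 1) with hu
  have key : g - tauX g ∈ Ideal.span {u} := by
    have hcomp : (Ideal.Quotient.mkₐ ℂ (Ideal.span {u})).comp tauX =
        Ideal.Quotient.mkₐ ℂ (Ideal.span {u}) := by
      apply MvPolynomial.algHom_ext
      intro v
      cases v with
      | inl i =>
        simp only [AlgHom.comp_apply, tauX, rename_X, Sum.map_inl,
          Ideal.Quotient.mkₐ_eq_mk]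
        rw [Ideal.Quotient.eq]
        fin_cases i
        · simp only [Fin.isValue, Fin.mk_zero, Fin.mk_one, Equiv.swap_apply_left,
            Equiv.swap_apply_right]
          rw [show X (Sum.inl 1) - X (Sum.inl 0) = -u by rw [hu]; ring]
          exact (Ideal.span {u}).neg_mem (Ideal.subset_span rfl)
        · simp only [Fin.isValue, Fin.mk_zero, Fin.mk_one, Equiv.swap_apply_left,
            Equiv.swap_apply_right]
          rw [← hu]
          exact Ideal.subset_span (Set.mem_singleton u)
      | inr i =>
        simp [tauX]
    have := congrArg (fun φ => φ g) hcomp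
    simp only [AlgHom.comp_apply, Ideal.Quotient.mkₐ_eq_mk] at this
    exact Ideal.Quotient.eq.1 this.symm
  rcases Ideal.mem_span_singleton'.1 key with ⟨a, ha⟩
  exact ⟨a, ha.symm⟩

lemma sub_tauY_dvd (g : MvPolynomial (Fin 2 ⊕ Fin 2) ℂ) :
    ∃ b, g - tauY g = b * (X (Sum.inr 0) - X (Sum.inr 1)) := by
  set v : MvPolynomial (Fin 2 ⊕ Fin 2) ℂ := X (Sum.inr 0) - X (Sum.inr 1) with hv
  have key : g - tauY g ∈ Ideal.span {v} := by
    have hcomp : (Ideal.Quotient.mkₐ ℂ (Ideal.span {v})).comp tauY =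
        Ideal.Quotient.mkₐ ℂ (Ideal.span {v}) := by
      apply MvPolynomial.algHom_ext
      intro w
      cases w with
      | inr i =>
        simp only [AlgHom.comp_apply, tauY, rename_X, Sum.map_inr,
          Ideal.Quotient.mkₐ_eq_mk]
        rw [Ideal.Quotient.eq]
        fin_cases i
        · simp only [Fin.isValue, Fin.mk_zero, Fin.mk_one, Equiv.swap_apply_left,
            Equiv.swap_apply_right]
          rw [show X (Sum.inr 1) - X (Sum.inr 0) = -v by rw [hv]; ring]
          exact (Ideal.span {v}).neg_mem (Ideal.subset_span rfl)
        · simp only [Fin.isValue, Fin.mk_zero, Fin.mk_one, Equiv.swap_apply_left,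
            Equiv.swap_apply_right]
          rw [← hv]
          exact Ideal.subset_span (Set.mem_singleton v)
      | inl i =>
        simp [tauY]
    have := congrArg (fun φ => φ g) hcomp
    simp only [AlgHom.comp_apply, Ideal.Quotient.mkₐ_eq_mk] at this
    exact Ideal.Quotient.eq.1 this.symm
  rcases Ideal.mem_span_singleton'.1 key with ⟨b, hb⟩
  exact ⟨b, hb.symm⟩

theorem antiinvariants_generated_by_two_elements
    (f : MvPolynomial (Fin 2 ⊕ Fin 2) ℂ) (hf : swapAction f = -f) :
    ∃ g₁ g₂ : MvPolynomial (Fin 2 ⊕ Fin 2) ℂ,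
      swapAction g₁ = g₁ ∧ swapAction g₂ = g₂ ∧
      f = g₁ * (MvPolynomial.X (Sum.inl 0) - MvPolynomial.X (Sum.inl 1))
        + g₂ * (MvPolynomial.X (Sum.inr 0) - MvPolynomial.X (Sum.inr 1)) := by
  set u : MvPolynomial (Fin 2 ⊕ Fin 2) ℂ := X (Sum.inl 0) - X (Sum.inl 1) with hu
  set v : MvPolynomial (Fin 2 ⊕ Fin 2) ℂ := X (Sum.inr 0) - X (Sum.inr 1) with hv
  obtain ⟨a, ha⟩ := sub_tauX_dvd f
  obtain ⟨b, hb⟩ := sub_tauY_dvd f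
  rw [← hu] at ha
  rw [← hv] at hb
  have htxv : tauX v = v := by simp [hv]
  have h2 : (2 : MvPolynomial (Fin 2 ⊕ Fin 2) ℂ) * f = a * u + tauX b * v := by
    have key : f - swapAction f = (f - tauX f) + tauX (f - tauY f) := by
      rw [swap_eq_comp, map_sub]; ring
    rw [hf, ha, hb, map_mul, htxv] at key
    linear_combination key
  have hσu : swapAction u = -u := by
    simp only [hu, swapAction, map_sub, rename_X, Sum.map_inl]
    simp [sub_eq_neg_add]
  have hσv : swapAction v = -v := by
    simp only [hv, swapAction, map_sub, rename_X, Sum.map_inr]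
    simp [sub_eq_neg_add]
  have h2' : (2 : MvPolynomial (Fin 2 ⊕ Fin 2) ℂ) * f =
      swapAction a * u + swapAction (tauX b) * v := by
    have key := congrArg swapAction h2
    simp only [map_add, map_mul, map_ofNat, hσu, hσv, hf] at key
    linear_combination -key
  have hσC : swapAction (MvPolynomial.C (4⁻¹ : ℂ)) = MvPolynomial.C (4⁻¹ : ℂ) := by
    simp [swapAction]
  refine ⟨MvPolynomial.C (4⁻¹ : ℂ) * (a + swapAction a),
         MvPolynomial.C (4⁻¹ : ℂ) * (tauX b + swapAction (tauX b)), ?_, ?_, ?_⟩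
  · simp only [map_mul, map_add, swap_invol, hσC]; ring
  · simp only [map_mul, map_add, swap_invol, hσC]; ring
  · have h4 : (4 : MvPolynomial (Fin 2 ⊕ Fin 2) ℂ) * f =
        (a + swapAction a) * u + (tauX b + swapAction (tauX b)) * v := by
      linear_combination h2 + h2'
    have hC4 : (MvPolynomial.C (4⁻¹ : ℂ) : MvPolynomial (Fin 2 ⊕ Fin 2) ℂ) * 4 = 1 := by
      rw [show (4 : MvPolynomial (Fin 2 ⊕ Fin 2) ℂ) = MvPolynomial.C (4 : ℂ) by
        simp [map_ofNat]]
      rw [← MvPolynomial.C_mul]; norm_num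
    calc f = MvPolynomial.C (4⁻¹ : ℂ) * 4 * f := by rw [hC4, one_mul]
    _ = _ := by rw [mul_assoc, h4]; ring
end
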